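/- Let A be a nonnegative weakly irreducible tensor of order m and dimension n. For any positive vector x, min over circuits gamma in G_A of (prod_{i in gamma} (A x^{m-1})_i / x_i^{m-1})^{1/|gamma|} <= rho(A) <= max over circuits gamma in G_A of (prod_{i in gamma} (A x^{m-1})_i / x_i^{m-1})^{1/|gamma|}. -/

import Mathlib

open scoped BigOperators
open Finset

/-- The arc relation of the digraph `G_A` of an order-`m` dimension-`n` tensor `A`,
    whose entries are indexed by a head index and a tail of `m - 1` indices:
    `(i, j)` is an arc when some entry `a_{i i_2 ... i_m} ≠ 0` has `j` among `i_2, ..., i_m`. -/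
def tArc (m n : ℕ) (A : Fin n → (Fin (m - 1) → Fin n) → ℝ) (i j : Fin n) : Prop :=
  ∃ t : Fin (m - 1) → Fin n, A i t ≠ 0 ∧ j ∈ Set.range t

/-- A digraph (given by its arc relation) is strongly connected. -/
def StronglyConnected {n : ℕ} (arc : Fin n → Fin n → Prop) : Prop :=
  ∀ i j : Fin n, Relation.ReflTransGen arc i j

/-- `γ 0, γ 1, ..., γ p = γ 0` is a circuit (closed directed walk, loops allowed)
    of length `p` in the digraph with arc relation `arc`. -/
def IsCircuit {n : ℕ} (arc : Fin n → Fin n → Prop) (p : ℕ) (γ : ℕ → Fin n) : Prop :=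
  0 < p ∧ γ p = γ 0 ∧ ∀ j < p, arc (γ j) (γ (j + 1))

/-- `lam` is an eigenvalue of the order-`m` dimension-`n` real tensor `A`:
    there is a nonzero complex vector `x` with `A x^{m-1} = lam x^{[m-1]}`. -/
def IsEig (m n : ℕ) (A : Fin n → (Fin (m - 1) → Fin n) → ℝ) (lam : ℂ) : Prop :=
  ∃ x : Fin n → ℂ, x ≠ 0 ∧ ∀ i : Fin n,
    ∑ t : Fin (m - 1) → Fin n, (A i t : ℂ) * ∏ j, x (t j) = lam * x i ^ (m - 1)

/-- The spectral radius of a tensor: the supremum of moduli of its eigenvalues. -/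
noncomputable def specRad (m n : ℕ) (A : Fin n → (Fin (m - 1) → Fin n) → ℝ) : ℝ :=
  sSup {r : ℝ | ∃ lam : ℂ, IsEig m n A lam ∧ ‖lam‖ = r}

/-- The `i`-th slice sum `K_i = ∑_{i_2,...,i_m} a_{i i_2 ... i_m}`. -/
def sliceSum (m n : ℕ) (A : Fin n → (Fin (m - 1) → Fin n) → ℝ) (i : Fin n) : ℝ :=
  ∑ t : Fin (m - 1) → Fin n, A i t

/-- `(A x^{m-1})_i = ∑_{i_2,...,i_m} a_{i i_2 ... i_m} x_{i_2} ⋯ x_{i_m}`. -/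
def Ax (m n : ℕ) (A : Fin n → (Fin (m - 1) → Fin n) → ℝ) (x : Fin n → ℝ) (i : Fin n) : ℝ :=
  ∑ t : Fin (m - 1) → Fin n, A i t * ∏ j, x (t j)

/-!
Put `r_i = (A x^{m-1})_i / x_i^{m-1}`. If `lam z^{[m-1]} ≤ A z^{m-1}` with `z ≥ 0`, `z ≠ 0`, walk
from a vertex with `z_i > 0` always to an out-neighbour maximising `z_j / x_j`; the walk closes into
a circuit, and multiplying `lam (z_i / x_i)^{m-1} ≤ r_i (z_j / x_j)^{m-1}` along it the weights
cancel, so `lam^p ≤ ∏ r_i`. Applied to `z = |v|` for an eigenvector `v` this gives the upper bound.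
Dually, if `A y^{m-1} ≤ lam y^{[m-1]}` with `y > 0`, maximising `x_j / y_j` gives a circuit with
`∏ r_i ≤ lam^p`. Such `y` are the Perron vectors of the positive tensors `A + ε`, obtained by
maximising over the Collatz–Wielandt set; letting `ε → 0` along a convergent subsequence gives a
nonnegative eigenpair of `A` whose eigenvalue is at least the minimum over circuits.
-/

open Finset Filter Topology

section Tensor

variable {m n : ℕ} {A : Fin n → (Fin (m - 1) → Fin n) → ℝ}

lemma Ax_nonneg (hA : ∀ i t, 0 ≤ A i t) {y : Fin n → ℝ} (hy : ∀ i, 0 ≤ y i) (i : Fin n) :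
    0 ≤ Ax m n A y i :=
  sum_nonneg fun t _ => mul_nonneg (hA i t) (prod_nonneg fun j _ => hy (t j))

lemma Ax_pos (hA : ∀ i t, 0 < A i t) {y : Fin n → ℝ} (hy : ∀ i, 0 ≤ y i)
    {q : Fin n} (hq : 0 < y q) (i : Fin n) : 0 < Ax m n A y i := by
  have hterm : 0 < A i (fun _ => q) * ∏ _j : Fin (m - 1), y q :=
    mul_pos (hA _ _) (prod_pos fun _ _ => hq)
  exact hterm.trans_le <| single_le_sum (f := fun t => A i t * ∏ j, y (t j))
    (fun t _ => mul_nonneg (hA i t).le (prod_nonneg fun j _ => hy (t j))) (mem_univ _)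

lemma Ax_smul (c : ℝ) (y : Fin n → ℝ) (i : Fin n) :
    Ax m n A (c • y) i = c ^ (m - 1) * Ax m n A y i := by
  simp only [Ax, Pi.smul_apply, smul_eq_mul, prod_mul_distrib, prod_const, card_univ,
    Fintype.card_fin, mul_sum]
  exact sum_congr rfl fun t _ => by ring

lemma Ax_add_const (c : ℝ) (y : Fin n → ℝ) (i : Fin n) :
    Ax m n (fun i t => A i t + c) y i = Ax m n A y i + c * (∑ j, y j) ^ (m - 1) := by
  simp only [Ax, Fintype.sum_pow, mul_sum, ← sum_add_distrib]
  exact sum_congr rfl fun t _ => by ring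

lemma Ax_one (i : Fin n) : Ax m n A 1 i = sliceSum m n A i := by
  simp [Ax, sliceSum]

lemma sliceSum_add_const (c : ℝ) (i : Fin n) :
    sliceSum m n (fun i t => A i t + c) i = sliceSum m n A i + c * n ^ (m - 1) := by
  simp [sliceSum, sum_add_distrib, mul_comm]

lemma continuous_Ax (i : Fin n) : Continuous fun y : Fin n → ℝ => Ax m n A y i := by
  unfold Ax; fun_prop

lemma Ax_lt_Ax (hm : 2 ≤ m) (hA : ∀ i t, 0 < A i t) {y z : Fin n → ℝ} (hy : ∀ i, 0 ≤ y i)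
    (hyz : ∀ i, y i ≤ z i) {q : Fin n} (hq : y q < z q) (i : Fin n) :
    Ax m n A y i < Ax m n A z i := by
  refine sum_lt_sum (fun t _ => mul_le_mul_of_nonneg_left
    (prod_le_prod (fun j _ => hy (t j)) fun j _ => hyz (t j)) (hA i t).le)
    ⟨fun _ => q, mem_univ _, mul_lt_mul_of_pos_left ?_ (hA i _)⟩
  simp only [prod_const, card_univ, Fintype.card_fin]
  exact pow_lt_pow_left₀ hq (hy q) (by omega)

lemma Ax_le_pow_mul_of_forall_tArc (hA : ∀ i t, 0 ≤ A i t) {u v : Fin n → ℝ} {K : ℝ}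
    {i : Fin n} (hu : ∀ j, 0 ≤ u j) (h : ∀ j, tArc m n A i j → u j ≤ K * v j) :
    Ax m n A u i ≤ K ^ (m - 1) * Ax m n A v i := by
  rw [← Ax_smul]
  refine sum_le_sum fun t _ => ?_
  by_cases hAt : A i t = 0
  · simp [hAt]
  exact mul_le_mul_of_nonneg_left
    (prod_le_prod (fun j _ => hu (t j)) fun j _ => h _ ⟨t, hAt, j, rfl⟩) (hA i t)

lemma exists_tArc_of_Ax_ne_zero (hm : 2 ≤ m) {y : Fin n → ℝ} {i : Fin n}
    (h : Ax m n A y i ≠ 0) : ∃ j, tArc m n A i j := by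
  obtain ⟨t, -, ht⟩ := exists_ne_zero_of_sum_ne_zero h
  exact ⟨t ⟨0, by omega⟩, t, left_ne_zero_of_mul ht, _, rfl⟩

end Tensor

section Circuit

variable {n : ℕ} {arc : Fin n → Fin n → Prop}

lemma IsCircuit.mono {arc' : Fin n → Fin n → Prop} (h : ∀ i j, arc i j → arc' i j) {p : ℕ}
    {γ : ℕ → Fin n} (hγ : IsCircuit arc p γ) : IsCircuit arc' p γ :=
  ⟨hγ.1, hγ.2.1, fun j hj => h _ _ (hγ.2.2 j hj)⟩

lemma exists_isCircuit_of_forall_exists {P : Fin n → Prop} (h : ∀ i, P i → ∃ j, P j ∧ arc i j)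
    {i₀ : Fin n} (h₀ : P i₀) : ∃ p γ, IsCircuit arc p γ ∧ ∀ j, P (γ j) := by
  choose σ hσ using fun i : {i // P i} => h i.1 i.2
  set f : {i // P i} → {i // P i} := fun i => ⟨σ i, (hσ i).1⟩
  obtain ⟨a, b, hab, hfab⟩ := Finite.exists_ne_map_eq_of_infinite fun k : ℕ => f^[k] ⟨i₀, h₀⟩
  wlog hlt : a < b generalizing a b
  · exact this b a hab.symm hfab.symm (by omega)
  refine ⟨b - a, fun j => (f^[a + j] ⟨i₀, h₀⟩).1, ⟨by omega, ?_, fun j _ => ?_⟩,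
    fun j => (f^[a + j] _).2⟩
  · simp only [Nat.add_sub_cancel' hlt.le, add_zero, hfab]
  · show arc (f^[a + j] _).1 (f^[a + j + 1] _).1
    rw [Function.iterate_succ_apply']
    exact (hσ _).2

lemma StronglyConnected.exists_arc_of_isCircuit (h : StronglyConnected arc) {p : ℕ}
    {γ : ℕ → Fin n} (hγ : IsCircuit arc p γ) (i : Fin n) : ∃ j, arc i j := by
  rcases (h i (γ 0)).cases_head with rfl | ⟨j, hij, -⟩
  · exact ⟨_, hγ.2.2 0 hγ.1⟩
  · exact ⟨j, hij⟩

end Circuit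

lemma prod_range_le_prod_range_of_mul_le_mul_succ {p : ℕ} {a b g : ℕ → ℝ}
    (hg : ∀ k, 0 < g k) (hgp : g p = g 0) (ha : ∀ k, 0 ≤ a k)
    (h : ∀ k < p, a k * g k ≤ b k * g (k + 1)) : ∏ k ∈ range p, a k ≤ ∏ k ∈ range p, b k := by
  have hshift : ∏ k ∈ range p, g (k + 1) = ∏ k ∈ range p, g k := by
    have e := prod_range_succ' g p
    rw [prod_range_succ g p, hgp] at e
    exact mul_right_cancel₀ (hg 0).ne' e.symm
  have hprod : ∏ k ∈ range p, (a k * g k) ≤ ∏ k ∈ range p, (b k * g (k + 1)) :=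
    prod_le_prod (fun k _ => mul_nonneg (ha k) (hg k).le) fun k hk => h k (mem_range.mp hk)
  rw [prod_mul_distrib, prod_mul_distrib, hshift] at hprod
  exact le_of_mul_le_mul_right hprod (prod_pos fun k _ => hg k)

section CircuitMean

variable {m n : ℕ} {A : Fin n → (Fin (m - 1) → Fin n) → ℝ} {x : Fin n → ℝ}

noncomputable def circuitMean (m n : ℕ) (A : Fin n → (Fin (m - 1) → Fin n) → ℝ)
    (x : Fin n → ℝ) (p : ℕ) (γ : ℕ → Fin n) : ℝ :=
  (∏ j ∈ range p, Ax m n A x (γ j) / x (γ j) ^ (m - 1)) ^ ((p : ℝ)⁻¹)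

def circuitMeans (m n : ℕ) (A : Fin n → (Fin (m - 1) → Fin n) → ℝ) (x : Fin n → ℝ) : Set ℝ :=
  {r | ∃ (p : ℕ) (γ : ℕ → Fin n), IsCircuit (tArc m n A) p γ ∧ r = circuitMean m n A x p γ}

lemma Ax_div_pow_nonneg (hA : ∀ i t, 0 ≤ A i t) (hx : ∀ i, 0 < x i) (i : Fin n) :
    0 ≤ Ax m n A x i / x i ^ (m - 1) :=
  div_nonneg (Ax_nonneg hA (fun j => (hx j).le) i) (pow_nonneg (hx i).le _)

lemma circuitMean_nonneg (hA : ∀ i t, 0 ≤ A i t) (hx : ∀ i, 0 < x i) (p : ℕ)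
    (γ : ℕ → Fin n) : 0 ≤ circuitMean m n A x p γ :=
  Real.rpow_nonneg (prod_nonneg fun _ _ => Ax_div_pow_nonneg hA hx _) _

lemma le_circuitMean_of_pow_le (hA : ∀ i t, 0 ≤ A i t) (hx : ∀ i, 0 < x i) {p : ℕ}
    (hp : 0 < p) {γ : ℕ → Fin n} {L : ℝ} (hL : 0 ≤ L)
    (h : L ^ p ≤ ∏ j ∈ range p, Ax m n A x (γ j) / x (γ j) ^ (m - 1)) :
    L ≤ circuitMean m n A x p γ := by
  rwa [circuitMean, Real.le_rpow_inv_iff_of_pos hL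
    (prod_nonneg fun _ _ => Ax_div_pow_nonneg hA hx _) (by exact_mod_cast hp), Real.rpow_natCast]

lemma circuitMean_le_of_le_pow (hA : ∀ i t, 0 ≤ A i t) (hx : ∀ i, 0 < x i) {p : ℕ}
    (hp : 0 < p) {γ : ℕ → Fin n} {L : ℝ} (hL : 0 ≤ L)
    (h : ∏ j ∈ range p, Ax m n A x (γ j) / x (γ j) ^ (m - 1) ≤ L ^ p) :
    circuitMean m n A x p γ ≤ L := by
  rwa [circuitMean, Real.rpow_inv_le_iff_of_pos
    (prod_nonneg fun _ _ => Ax_div_pow_nonneg hA hx _) hL (by exact_mod_cast hp), Real.rpow_natCast]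

lemma bddAbove_circuitMeans (hA : ∀ i t, 0 ≤ A i t) (hx : ∀ i, 0 < x i) :
    BddAbove (circuitMeans m n A x) := by
  set R := ∑ i, Ax m n A x i / x i ^ (m - 1)
  have hR : ∀ i, Ax m n A x i / x i ^ (m - 1) ≤ R := fun i =>
    single_le_sum (fun j _ => Ax_div_pow_nonneg hA hx j) (mem_univ i)
  refine ⟨R, ?_⟩
  rintro _ ⟨p, γ, hγ, rfl⟩
  refine circuitMean_le_of_le_pow hA hx hγ.1 ((Ax_div_pow_nonneg hA hx (γ 0)).trans (hR _)) ?_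
  calc _ ≤ ∏ _j ∈ range p, R := prod_le_prod (fun _ _ => Ax_div_pow_nonneg hA hx _) fun _ _ => hR _
    _ = R ^ p := by rw [prod_const, card_range]

theorem exists_isCircuit_le_circuitMean (hm : 2 ≤ m) (hA : ∀ i t, 0 ≤ A i t)
    (hx : ∀ i, 0 < x i) {Y : Fin n → ℝ} (hY : ∀ i, 0 ≤ Y i) {i₀ : Fin n} (hi₀ : 0 < Y i₀)
    {L : ℝ} (hL : 0 < L) (h : ∀ i, L * Y i ^ (m - 1) ≤ Ax m n A Y i) :
    ∃ p γ, IsCircuit (tArc m n A) p γ ∧ L ≤ circuitMean m n A x p γ := by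
  set c : Fin n → ℝ := fun i => Y i / x i
  have hYc : ∀ i, Y i = c i * x i := fun i => (div_mul_cancel₀ _ (hx i).ne').symm
  have hstep : ∀ i, 0 < c i → ∃ j, 0 < c j ∧ tArc m n A i j ∧
      L * c i ^ (m - 1) ≤ Ax m n A x i / x i ^ (m - 1) * c j ^ (m - 1) := by
    intro i hci
    have hLY : 0 < L * Y i ^ (m - 1) :=
      mul_pos hL (pow_pos (by rw [hYc]; exact mul_pos hci (hx i)) _)
    obtain ⟨j, hij, hmax⟩ := Set.exists_max_image {k | tArc m n A i k} c (Set.toFinite _)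
      (exists_tArc_of_Ax_ne_zero hm (hLY.trans_le (h i)).ne')
    have hAY : Ax m n A Y i ≤ c j ^ (m - 1) * Ax m n A x i :=
      Ax_le_pow_mul_of_forall_tArc hA hY fun k hk => by
        rw [hYc k]; exact mul_le_mul_of_nonneg_right (hmax k hk) (hx k).le
    have hle : L * c i ^ (m - 1) ≤ Ax m n A x i / x i ^ (m - 1) * c j ^ (m - 1) := by
      rw [div_mul_eq_mul_div, le_div_iff₀ (pow_pos (hx i) _), mul_assoc, ← mul_pow, ← hYc,
        mul_comm _ (c j ^ _)]
      exact (h i).trans hAY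
    refine ⟨j, ?_, hij, hle⟩
    by_contra hcj
    rw [le_antisymm (not_lt.mp hcj) (div_nonneg (hY j) (hx j).le), zero_pow (by omega),
      mul_zero] at hle
    exact (mul_pos hL (pow_pos hci _)).not_ge hle
  obtain ⟨p, γ, hγ, hpos⟩ := exists_isCircuit_of_forall_exists hstep (div_pos hi₀ (hx i₀))
  refine ⟨p, γ, hγ.mono fun _ _ h => h.1, le_circuitMean_of_pow_le hA hx hγ.1 hL.le ?_⟩
  have := prod_range_le_prod_range_of_mul_le_mul_succ (fun k => pow_pos (hpos k) _)
    (by rw [hγ.2.1]) (fun _ => hL.le) fun k hk => (hγ.2.2 k hk).2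
  rwa [prod_const, card_range] at this

theorem exists_isCircuit_circuitMean_le (hn : 0 < n) (hA : ∀ i t, 0 ≤ A i t) (hx : ∀ i, 0 < x i)
    (hout : ∀ i, ∃ j, tArc m n A i j) {y : Fin n → ℝ} (hy : ∀ i, 0 < y i) {lam : ℝ}
    (h : ∀ i, Ax m n A y i ≤ lam * y i ^ (m - 1)) :
    ∃ p γ, IsCircuit (tArc m n A) p γ ∧ circuitMean m n A x p γ ≤ lam := by
  have hlam : 0 ≤ lam := nonneg_of_mul_nonneg_left
    ((Ax_nonneg hA (fun j => (hy j).le) ⟨0, hn⟩).trans (h _)) (pow_pos (hy _) _)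
  set d : Fin n → ℝ := fun i => x i / y i
  have hd : ∀ i, 0 < d i := fun i => div_pos (hx i) (hy i)
  have hxd : ∀ i, x i = d i * y i := fun i => (div_mul_cancel₀ _ (hy i).ne').symm
  have hstep : ∀ i, ∃ j, tArc m n A i j ∧
      Ax m n A x i / x i ^ (m - 1) * d i ^ (m - 1) ≤ lam * d j ^ (m - 1) := by
    intro i
    obtain ⟨j, hij, hmax⟩ := Set.exists_max_image {k | tArc m n A i k} d (Set.toFinite _)
      (hout i)
    have hAx : Ax m n A x i ≤ d j ^ (m - 1) * Ax m n A y i :=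
      Ax_le_pow_mul_of_forall_tArc hA (fun k => (hx k).le) fun k hk => by
        rw [hxd k]; exact mul_le_mul_of_nonneg_right (hmax k hk) (hy k).le
    refine ⟨j, hij, ?_⟩
    rw [hxd i, mul_pow, div_mul_eq_mul_div, div_le_iff₀ (mul_pos (pow_pos (hd i) _)
      (pow_pos (hy i) _))]
    calc Ax m n A x i * d i ^ (m - 1) ≤ d j ^ (m - 1) * (lam * y i ^ (m - 1)) * d i ^ (m - 1) :=
          mul_le_mul_of_nonneg_right (hAx.trans (mul_le_mul_of_nonneg_left (h i)
            (pow_nonneg (hd j).le _))) (pow_nonneg (hd i).le _)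
      _ = lam * d j ^ (m - 1) * (d i ^ (m - 1) * y i ^ (m - 1)) := by ring
  obtain ⟨p, γ, hγ, -⟩ := exists_isCircuit_of_forall_exists (P := fun _ => True)
    (fun i _ => (hstep i).imp fun _ h => ⟨trivial, h⟩) (i₀ := ⟨0, hn⟩) trivial
  refine ⟨p, γ, hγ.mono fun _ _ h => h.1, circuitMean_le_of_le_pow hA hx hγ.1 hlam ?_⟩
  have := prod_range_le_prod_range_of_mul_le_mul_succ (fun k => pow_pos (hd (γ k)) _)
    (by rw [hγ.2.1]) (fun k => Ax_div_pow_nonneg hA hx (γ k)) fun k hk => (hγ.2.2 k hk).2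
  rwa [prod_const, card_range] at this

end CircuitMean

lemma stdSimplex.exists_pos {n : ℕ} {y : Fin n → ℝ} (hy : y ∈ stdSimplex ℝ (Fin n)) :
    ∃ i, 0 < y i := by
  obtain ⟨i, -, hi⟩ := exists_lt_of_sum_lt (s := univ) (f := 0) (g := y)
    (by rw [hy.2]; simp)
  exact ⟨i, hi⟩

section Perron

variable {m n : ℕ} {A : Fin n → (Fin (m - 1) → Fin n) → ℝ}

/-- The Collatz–Wielandt upper bound, read at a maximal coordinate of `Y`. -/
lemma exists_le_sliceSum (hA : ∀ i t, 0 ≤ A i t) {Y : Fin n → ℝ} (hY : ∀ i, 0 ≤ Y i)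
    {q : Fin n} (hq : 0 < Y q) {L : ℝ} (h : ∀ i, L * Y i ^ (m - 1) ≤ Ax m n A Y i) :
    ∃ i, L ≤ sliceSum m n A i := by
  have : Nonempty (Fin n) := ⟨q⟩
  obtain ⟨i, hmax⟩ := Finite.exists_max Y
  refine ⟨i, le_of_mul_le_mul_left ?_ (pow_pos (hq.trans_le (hmax q)) (m - 1))⟩
  rw [← Ax_one, mul_comm]
  exact (h i).trans (Ax_le_pow_mul_of_forall_tArc hA hY fun k _ => by simpa using hmax k)

/-- The Collatz–Wielandt set, normalised to the standard simplex. -/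
def subEigenpairs (m n : ℕ) (A : Fin n → (Fin (m - 1) → Fin n) → ℝ) :
    Set (ℝ × (Fin n → ℝ)) :=
  {p | p.2 ∈ stdSimplex ℝ (Fin n) ∧ ∀ i, p.1 * p.2 i ^ (m - 1) ≤ Ax m n A p.2 i}

lemma isClosed_subEigenpairs : IsClosed (subEigenpairs m n A) := by
  simp only [subEigenpairs, Set.ofPred_and, Set.ofPred_forall]
  exact ((isClosed_stdSimplex ℝ (Fin n)).preimage continuous_snd).inter <|
    isClosed_iInter fun i => isClosed_le (by fun_prop) ((continuous_Ax i).comp continuous_snd)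

lemma fst_le_of_mem_subEigenpairs (hA : ∀ i t, 0 ≤ A i t) {p : ℝ × (Fin n → ℝ)}
    (hp : p ∈ subEigenpairs m n A) : p.1 ≤ ∑ i, sliceSum m n A i := by
  obtain ⟨q, hq⟩ := stdSimplex.exists_pos hp.1
  obtain ⟨i, hi⟩ := exists_le_sliceSum hA hp.1.1 hq hp.2
  exact hi.trans (single_le_sum (fun j _ => sum_nonneg fun t _ => hA j t) (mem_univ i))

lemma mk_smul_mem_subEigenpairs {t : ℝ} {y : Fin n → ℝ} (hy : ∀ i, 0 ≤ y i)
    (hs : 0 < ∑ i, y i) (h : ∀ i, t * y i ^ (m - 1) ≤ Ax m n A y i) :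
    (t, (∑ i, y i)⁻¹ • y) ∈ subEigenpairs m n A := by
  refine ⟨⟨fun i => smul_nonneg (inv_nonneg.2 hs.le) (hy i), ?_⟩, fun i => ?_⟩
  · simp only [Pi.smul_apply, smul_eq_mul, ← mul_sum]
    exact inv_mul_cancel₀ hs.ne'
  · simp only [Ax_smul, Pi.smul_apply, smul_eq_mul, mul_pow]
    rw [mul_left_comm]
    exact mul_le_mul_of_nonneg_left (h i) (by positivity)

lemma exists_mem_subEigenpairs_gt (hn : 0 < n) {y : Fin n → ℝ} (hy : ∀ i, 0 < y i) {L : ℝ}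
    (h : ∀ i, L * y i ^ (m - 1) < Ax m n A y i) : ∃ p ∈ subEigenpairs m n A, L < p.1 := by
  set t := univ.inf' ⟨⟨0, hn⟩, mem_univ _⟩ fun i => Ax m n A y i / y i ^ (m - 1)
  refine ⟨_, mk_smul_mem_subEigenpairs (t := t) (fun i => (hy i).le)
    (sum_pos (fun i _ => hy i) ⟨⟨0, hn⟩, mem_univ _⟩) fun i => ?_, ?_⟩
  · exact (le_div_iff₀ (pow_pos (hy i) _)).1 (inf'_le _ (mem_univ i))
  · exact (lt_inf'_iff (H := ⟨⟨0, hn⟩, mem_univ _⟩)).2 fun i _ =>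
      (lt_div_iff₀ (pow_pos (hy i) _)).2 (h i)

lemma exists_pos_lt_Ax_of_le_Ax (hm : 2 ≤ m) (hA : ∀ i t, 0 < A i t) {y : Fin n → ℝ}
    (hy : y ∈ stdSimplex ℝ (Fin n)) {lam : ℝ} (hlam : 0 < lam)
    (hle : ∀ i, lam * y i ^ (m - 1) ≤ Ax m n A y i) {q : Fin n}
    (hq : lam * y q ^ (m - 1) < Ax m n A y q) :
    ∃ w : Fin n → ℝ, (∀ i, 0 < w i) ∧ ∀ i, lam * w i ^ (m - 1) < Ax m n A w i := by
  have hm1 : m - 1 ≠ 0 := by omega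
  obtain ⟨r, hr⟩ := stdSimplex.exists_pos hy
  have hAy : ∀ i, 0 < Ax m n A y i / lam := fun i => div_pos (Ax_pos hA hy.1 hr i) hlam
  set w : Fin n → ℝ := fun i => (Ax m n A y i / lam) ^ ((m - 1 : ℕ) : ℝ)⁻¹
  have hw : ∀ i, 0 < w i := fun i => Real.rpow_pos_of_pos (hAy i) _
  have hw_pow : ∀ i, w i ^ (m - 1) = Ax m n A y i / lam := fun i =>
    Real.rpow_inv_natCast_pow (hAy i).le hm1
  have hyw : ∀ i, y i ≤ w i := fun i => le_of_pow_le_pow_left₀ hm1 (hw i).le <| by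
    rw [hw_pow, le_div_iff₀ hlam, mul_comm]; exact hle i
  have hyw_q : y q < w q := lt_of_pow_lt_pow_left₀ (m - 1) (hw q).le <| by
    rw [hw_pow, lt_div_iff₀ hlam, mul_comm]; exact hq
  refine ⟨w, hw, fun i => ?_⟩
  rw [hw_pow, mul_div_cancel₀ _ hlam.ne']
  exact Ax_lt_Ax hm hA hy.1 hyw hyw_q i

theorem exists_pos_eigenpair_of_pos (hm : 2 ≤ m) (hn : 0 < n) (hA : ∀ i t, 0 < A i t) :
    ∃ lam : ℝ, 0 < lam ∧ ∃ y ∈ stdSimplex ℝ (Fin n), (∀ i, 0 < y i) ∧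
      ∀ i, Ax m n A y i = lam * y i ^ (m - 1) := by
  set K := subEigenpairs m n A ∩ {p | 0 ≤ p.1}
  have hK : IsCompact K := (isCompact_Icc.prod (isCompact_stdSimplex ℝ (Fin n))).of_isClosed_subset
    (isClosed_subEigenpairs.inter (isClosed_le continuous_const continuous_fst))
    fun p hp => ⟨⟨hp.2, fst_le_of_mem_subEigenpairs (fun i t => (hA i t).le) hp.1⟩, hp.1.1⟩
  obtain ⟨p₀, hp₀, hp₀pos⟩ := exists_mem_subEigenpairs_gt (A := A) (L := 0) hn
    (fun _ => one_pos) fun i => by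
      simpa using Ax_pos hA (fun _ => zero_le_one) (q := ⟨0, hn⟩) one_pos i
  obtain ⟨⟨lam, y⟩, ⟨hmem, -⟩, hmax⟩ :=
    hK.exists_isMaxOn ⟨p₀, hp₀, hp₀pos.le⟩ continuous_fst.continuousOn
  have hlam : 0 < lam := hp₀pos.trans_le (isMaxOn_iff.1 hmax p₀ ⟨hp₀, hp₀pos.le⟩)
  have heig : ∀ i, Ax m n A y i = lam * y i ^ (m - 1) := by
    by_contra! ⟨q, hq⟩
    obtain ⟨w, hw, hlt⟩ :=
      exists_pos_lt_Ax_of_le_Ax hm hA hmem.1 hlam hmem.2 ((hmem.2 q).lt_of_ne' hq)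
    obtain ⟨p, hp, hlamp⟩ := exists_mem_subEigenpairs_gt hn hw hlt
    exact (isMaxOn_iff.1 hmax p ⟨hp, hlam.le.trans hlamp.le⟩).not_gt hlamp
  refine ⟨lam, hlam, y, hmem.1, fun i => (hmem.1.1 i).lt_of_ne' fun hyi : y i = 0 => ?_, heig⟩
  obtain ⟨r, hr⟩ := stdSimplex.exists_pos hmem.1
  have := Ax_pos hA hmem.1.1 hr i
  rw [heig, hyi, zero_pow (by omega), mul_zero] at this
  exact this.false

end Perron

section Eigen

variable {m n : ℕ} {A : Fin n → (Fin (m - 1) → Fin n) → ℝ}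

theorem exists_nonneg_eigenpair_ge (hm : 2 ≤ m) (hn : 0 < n) (hA : ∀ i t, 0 ≤ A i t) {s : ℝ}
    (hs : ∀ (lam : ℝ) (y : Fin n → ℝ), (∀ i, 0 < y i) →
      (∀ i, Ax m n A y i ≤ lam * y i ^ (m - 1)) → s ≤ lam) :
    ∃ lam : ℝ, s ≤ lam ∧ 0 ≤ lam ∧ ∃ y ∈ stdSimplex ℝ (Fin n),
      ∀ i, Ax m n A y i = lam * y i ^ (m - 1) := by
  set ε : ℕ → ℝ := fun k => 1 / ((k : ℝ) + 1)
  have hε : ∀ k, 0 < ε k := fun k => by positivity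
  have hAε : ∀ k i t, 0 < A i t + ε k := fun k i t => add_pos_of_nonneg_of_pos (hA i t) (hε k)
  choose lam hlam y hy hypos heig using fun k => exists_pos_eigenpair_of_pos hm hn (hAε k)
  have heigA : ∀ k i, Ax m n A (y k) i + ε k = lam k * y k i ^ (m - 1) := fun k i => by
    rw [← heig, Ax_add_const, (hy k).2, one_pow, mul_one]
  have hslam : ∀ k, s ≤ lam k := fun k =>
    hs _ _ (hypos k) fun i => by rw [← heigA]; linarith [hε k]
  set C := ∑ i, sliceSum m n A i + (n : ℝ) ^ (m - 1)
  have hC : ∀ k, lam k ≤ C := by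
    intro k
    obtain ⟨i, hi⟩ := exists_le_sliceSum (fun i t => (hAε k i t).le) (hy k).1
      (hypos k ⟨0, hn⟩) fun i => (heig k i).ge
    rw [sliceSum_add_const] at hi
    refine hi.trans (add_le_add (single_le_sum (fun j _ => sum_nonneg fun t _ => hA j t)
      (mem_univ i)) (mul_le_of_le_one_left (by positivity) ?_))
    exact div_le_one_of_le₀ (by linarith [(Nat.cast_nonneg k : (0 : ℝ) ≤ k)]) (by positivity)
  obtain ⟨⟨lam', y'⟩, ⟨⟨hlam', -⟩, hy'⟩, φ, hφ, hconv⟩ :=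
    (isCompact_Icc.prod (isCompact_stdSimplex ℝ (Fin n))).tendsto_subseq
      (x := fun k => (lam k, y k)) fun k => ⟨⟨(hlam k).le, hC k⟩, hy k⟩
  have hlim_lam : Tendsto (fun k => lam (φ k)) atTop (𝓝 lam') :=
    (continuous_fst.tendsto _).comp hconv
  have hlim_y : Tendsto (fun k => y (φ k)) atTop (𝓝 y') := (continuous_snd.tendsto _).comp hconv
  have hlim_ε : Tendsto (fun k => ε (φ k)) atTop (𝓝 0) :=
    tendsto_one_div_add_atTop_nhds_zero_nat.comp hφ.tendsto_atTop
  refine ⟨lam', ge_of_tendsto' hlim_lam fun k => hslam _, hlam', y', hy', fun i => ?_⟩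
  have hlhs : Tendsto (fun k => Ax m n A (y (φ k)) i + ε (φ k)) atTop (𝓝 (Ax m n A y' i + 0)) :=
    (((continuous_Ax i).tendsto _).comp hlim_y).add hlim_ε
  have hrhs : Tendsto (fun k => lam (φ k) * y (φ k) i ^ (m - 1)) atTop
      (𝓝 (lam' * y' i ^ (m - 1))) :=
    hlim_lam.mul ((((continuous_apply i).tendsto _).comp hlim_y).pow _)
  simpa using tendsto_nhds_unique (hlhs.congr fun k => heigA _ i) hrhs

lemma isEig_ofReal {lam : ℝ} {y : Fin n → ℝ} (hy : y ≠ 0)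
    (h : ∀ i, Ax m n A y i = lam * y i ^ (m - 1)) : IsEig m n A lam := by
  refine ⟨fun i => (y i : ℂ), fun h0 => hy (funext fun i => ?_), fun i => ?_⟩
  · simpa using congrFun h0 i
  · have := congrArg Complex.ofReal (h i)
    push_cast [Ax] at this
    exact this

lemma IsEig.exists_le_Ax_norm (hA : ∀ i t, 0 ≤ A i t) {lam : ℂ} (hlam : IsEig m n A lam) :
    ∃ Y : Fin n → ℝ, (∀ i, 0 ≤ Y i) ∧ (∃ i, 0 < Y i) ∧
      ∀ i, ‖lam‖ * Y i ^ (m - 1) ≤ Ax m n A Y i := by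
  obtain ⟨v, hv0, hv⟩ := hlam
  obtain ⟨i₀, hi₀⟩ := Function.ne_iff.1 hv0
  refine ⟨fun i => ‖v i‖, fun i => norm_nonneg _, ⟨i₀, norm_pos_iff.2 hi₀⟩, fun i => ?_⟩
  calc ‖lam‖ * ‖v i‖ ^ (m - 1) = ‖∑ t, (A i t : ℂ) * ∏ j, v (t j)‖ := by
        rw [hv i, norm_mul, norm_pow]
    _ ≤ ∑ t, ‖(A i t : ℂ) * ∏ j, v (t j)‖ := norm_sum_le _ _
    _ = Ax m n A (fun i => ‖v i‖) i := sum_congr rfl fun t _ => by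
        rw [norm_mul, norm_prod, Complex.norm_real, Real.norm_of_nonneg (hA i t)]

theorem IsEig.norm_le_sSup_circuitMeans (hm : 2 ≤ m) (hA : ∀ i t, 0 ≤ A i t) {x : Fin n → ℝ}
    (hx : ∀ i, 0 < x i) {lam : ℂ} (hlam : IsEig m n A lam) :
    ‖lam‖ ≤ sSup (circuitMeans m n A x) := by
  rcases (norm_nonneg lam).eq_or_lt with h0 | hpos
  · rw [← h0]
    exact Real.sSup_nonneg fun _ ⟨p, γ, _, hr⟩ => hr ▸ circuitMean_nonneg hA hx p γ
  obtain ⟨Y, hY, ⟨i₀, hi₀⟩, hYle⟩ := hlam.exists_le_Ax_norm hA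
  obtain ⟨p, γ, hγ, hle⟩ := exists_isCircuit_le_circuitMean hm hA hx hY hi₀ hpos hYle
  exact hle.trans (le_csSup (bddAbove_circuitMeans hA hx) ⟨p, γ, hγ, rfl⟩)

end Eigen

theorem stmt5 (m n : ℕ) (hm : 2 ≤ m) (hn : 0 < n)
    (A : Fin n → (Fin (m - 1) → Fin n) → ℝ) (hA : ∀ i t, 0 ≤ A i t)
    (hirr : StronglyConnected (tArc m n A))
    (x : Fin n → ℝ) (hx : ∀ i, 0 < x i) :
    sInf {r : ℝ | ∃ (p : ℕ) (γ : ℕ → Fin n), IsCircuit (tArc m n A) p γ ∧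
        r = (∏ j ∈ Finset.range p, Ax m n A x (γ j) / x (γ j) ^ (m - 1)) ^ ((p : ℝ)⁻¹)}
      ≤ specRad m n A ∧
    specRad m n A ≤
      sSup {r : ℝ | ∃ (p : ℕ) (γ : ℕ → Fin n), IsCircuit (tArc m n A) p γ ∧
        r = (∏ j ∈ Finset.range p, Ax m n A x (γ j) / x (γ j) ^ (m - 1)) ^ ((p : ℝ)⁻¹)} := by
  change sInf (circuitMeans m n A x) ≤ _ ∧ _ ≤ sSup (circuitMeans m n A x)
  have hS_nonneg : ∀ r ∈ circuitMeans m n A x, 0 ≤ r := fun _ ⟨p, γ, _, hr⟩ =>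
    hr ▸ circuitMean_nonneg hA hx p γ
  have hE : ∀ e ∈ {r : ℝ | ∃ lam : ℂ, IsEig m n A lam ∧ ‖lam‖ = r},
      e ≤ sSup (circuitMeans m n A x) := fun _ ⟨_, hlam, he⟩ =>
    he ▸ hlam.norm_le_sSup_circuitMeans hm hA hx
  refine ⟨?_, Real.sSup_le hE (Real.sSup_nonneg hS_nonneg)⟩
  rcases (circuitMeans m n A x).eq_empty_or_nonempty with hS | ⟨_, p, γ, hγ, -⟩
  · rw [hS, Real.sInf_empty]
    exact Real.sSup_nonneg fun _ ⟨_, _, he⟩ => he ▸ norm_nonneg _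
  obtain ⟨lam, hslam, hlam, y, hy, heig⟩ := exists_nonneg_eigenpair_ge hm hn hA
    fun lam y hy hle => by
      obtain ⟨p, γ, hγ, hle⟩ := exists_isCircuit_circuitMean_le hn hA hx
        (hirr.exists_arc_of_isCircuit hγ) hy hle
      exact (csInf_le ⟨0, hS_nonneg⟩ ⟨p, γ, hγ, rfl⟩).trans hle
  obtain ⟨q, hq⟩ := stdSimplex.exists_pos hy
  exact hslam.trans (le_csSup ⟨_, hE⟩
    ⟨lam, isEig_ofReal (Function.ne_iff.2 ⟨q, hq.ne'⟩) heig, by simp [abs_of_nonneg hlam]⟩)
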